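/- Let K be a smooth solution of the oriented associativity equations (AE) on ℝⁿ, let λ ∈ ℝ, and let ψ = (ψ^1,…,ψ^n) be a smooth solution of the vector spectral problem ∂_β ψ^α = λ ∂_β∂_γ K^α ψ^γ for all α,β. Then G^α = ψ^α is a symmetry characteristic of (AE) at K, i.e. it satisfies the linearized oriented associativity equations (LAE). -/

import Mathlib

/-- Partial derivative of `f` in the `i`-th coordinate direction on `ℝⁿ`. -/
noncomputable def pd {n : ℕ} (i : Fin n) (f : (Fin n → ℝ) → ℝ) : (Fin n → ℝ) → ℝ :=
  fun x => fderiv ℝ f x (Pi.single i 1)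

lemma pd_smooth {n : ℕ} (i : Fin n) {f : (Fin n → ℝ) → ℝ} (hf : ContDiff ℝ (⊤ : ℕ∞) f) :
    ContDiff ℝ (⊤ : ℕ∞) (pd i f) :=
  (hf.fderiv_right (by simp)).clm_apply contDiff_const

lemma pd_comm {n : ℕ} (i j : Fin n) {f : (Fin n → ℝ) → ℝ} (hf : ContDiff ℝ (⊤ : ℕ∞) f) :
    pd i (pd j f) = pd j (pd i f) := by
  funext x
  have hdf : Differentiable ℝ (fderiv ℝ f) :=
    (hf.fderiv_right (m := (⊤ : ℕ∞)) (by simp)).differentiable (by simp)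
  have key : ∀ (a b : Fin n), pd a (pd b f) x
      = fderiv ℝ (fderiv ℝ f) x (Pi.single a 1) (Pi.single b 1) := by
    intro a b
    show fderiv ℝ (fun y => fderiv ℝ f y (Pi.single b 1)) x (Pi.single a 1) = _
    rw [fderiv_clm_apply (hdf x) (differentiableAt_const _)]
    simp
  rw [key, key]
  exact (hf.contDiffAt.isSymmSndFDerivAt (by simp [minSmoothness_of_isRCLikeNormedField]; exact WithTop.coe_le_coe.mpr (le_top : (2 : ℕ∞) ≤ ⊤))).eq _ _

lemma pd_mul {n : ℕ} (i : Fin n) {f g : (Fin n → ℝ) → ℝ} (hf : ContDiff ℝ (⊤ : ℕ∞) f)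
    (hg : ContDiff ℝ (⊤ : ℕ∞) g) (x : Fin n → ℝ) :
    pd i (fun y => f y * g y) x = pd i f x * g x + f x * pd i g x := by
  unfold pd
  rw [fderiv_fun_mul (hf.differentiable (by simp) x) (hg.differentiable (by simp) x)]
  simp [mul_comm]
  ring

lemma pd_sum {n : ℕ} {ι : Type*} [Fintype ι] (i : Fin n) (F : ι → (Fin n → ℝ) → ℝ)
    (hF : ∀ j, ContDiff ℝ (⊤ : ℕ∞) (F j)) (x : Fin n → ℝ) :
    pd i (fun y => ∑ j, F j y) x = ∑ j, pd i (F j) x := by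
  unfold pd
  rw [fderiv_fun_sum (fun j _ => (hF j).differentiable (by simp) x)]
  simp

lemma pd_const_mul {n : ℕ} (i : Fin n) (c : ℝ) {f : (Fin n → ℝ) → ℝ}
    (hf : ContDiff ℝ (⊤ : ℕ∞) f) (x : Fin n → ℝ) :
    pd i (fun y => c * f y) x = c * pd i f x := by
  unfold pd
  rw [fderiv_const_mul (hf.differentiable (by simp) x)]
  simp

lemma sum_congr' {n : ℕ} {f g : Fin n → ℝ} (h : ∀ i, f i = g i) :
    ∑ i, f i = ∑ i, g i :=
  Finset.sum_congr rfl fun i _ => h i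

/-- Generic expansion of a sum `∑ ρ, Q ρ * W ρ` where each `Q ρ` has the
"spectral second derivative" shape. -/
lemma expand_gen {n : ℕ} (lam : ℝ) (p : Fin n → ℝ)
    (Q : Fin n → ℝ) (U V : Fin n → Fin n → ℝ) (B : Fin n → Fin n → Fin n → ℝ)
    (W : Fin n → ℝ)
    (hQ : ∀ ρ, Q ρ = lam * ∑ c, (U ρ c * p c + V ρ c * (lam * ∑ s, B ρ c s * p s))) :
    ∑ ρ, Q ρ * W ρ
      = lam * (∑ c, p c * ∑ ρ, U ρ c * W ρ)
        + lam ^ 2 * (∑ s, p s * ∑ ρ, ∑ c, V ρ c * B ρ c s * W ρ) := by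
  have step1 : ∑ ρ, Q ρ * W ρ
      = ∑ ρ, ∑ c, (lam * (U ρ c * p c * W ρ)
          + lam ^ 2 * ∑ s, V ρ c * B ρ c s * W ρ * p s) := by
    refine sum_congr' fun ρ => ?_
    rw [hQ ρ, mul_assoc, Finset.sum_mul, Finset.mul_sum]
    refine sum_congr' fun c => ?_
    have h : ∑ s, V ρ c * B ρ c s * W ρ * p s
        = V ρ c * ((∑ s, B ρ c s * p s) * W ρ) := by
      rw [Finset.sum_mul, Finset.mul_sum]
      exact sum_congr' fun s => by ring
    rw [h]; ring
  rw [step1]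
  simp only [Finset.sum_add_distrib]
  congr 1
  · rw [Finset.sum_comm, Finset.mul_sum]
    refine sum_congr' fun c => ?_
    rw [Finset.mul_sum, Finset.mul_sum]
    exact sum_congr' fun ρ => by ring
  · have reorder : ∑ ρ, ∑ c, lam ^ 2 * ∑ s, V ρ c * B ρ c s * W ρ * p s
        = ∑ s, ∑ ρ, ∑ c, lam ^ 2 * (V ρ c * B ρ c s * W ρ * p s) := by
      have h1 : ∀ ρ, ∑ c, lam ^ 2 * ∑ s, V ρ c * B ρ c s * W ρ * p s
          = ∑ s, ∑ c, lam ^ 2 * (V ρ c * B ρ c s * W ρ * p s) := by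
        intro ρ
        rw [Finset.sum_comm]
        refine sum_congr' fun c => ?_
        rw [Finset.mul_sum]
      rw [sum_congr' h1, Finset.sum_comm]
    rw [reorder, Finset.mul_sum]
    refine sum_congr' fun s => ?_
    rw [Finset.mul_sum, Finset.mul_sum]
    refine sum_congr' fun ρ => ?_
    rw [Finset.mul_sum, Finset.mul_sum]
    exact sum_congr' fun c => by ring


lemma key_alg {n : ℕ}
    (A : Fin n → Fin n → Fin n → ℝ)
    (T : Fin n → Fin n → Fin n → Fin n → ℝ)
    (p : Fin n → ℝ) (lam : ℝ)
    (hAs : ∀ a b m, A a b m = A b a m)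
    (hT1 : ∀ a b c m, T a b c m = T b a c m)
    (hT2 : ∀ a b c m, T a b c m = T a c b m)
    (hA : ∀ a b c m, ∑ ρ, A a ρ m * A b c ρ = ∑ ρ, A a b ρ * A ρ c m)
    (hdA : ∀ s a b c m,
      ∑ ρ, (T s a ρ m * A b c ρ + A a ρ m * T s b c ρ)
        = ∑ ρ, (T s a b ρ * A ρ c m + A a b ρ * T s ρ c m))
    (P : Fin n → Fin n → Fin n → ℝ)
    (hP : ∀ a b m, P a b m
      = lam * ∑ c, (T a b c m * p c + A b c m * (lam * ∑ s, A a s c * p s)))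
    (α β γ ν : Fin n) :
    (∑ ρ, P α ρ ν * A β γ ρ) + (∑ ρ, A α ρ ν * P β γ ρ)
      = (∑ ρ, P α β ρ * A ρ γ ν) + (∑ ρ, A α β ρ * P ρ γ ν) := by
  have T231 : ∀ a b c m, T a b c m = T b c a m := fun a b c m => by
    rw [hT1, hT2]
  -- the four expansions
  have e1 := expand_gen lam p (fun ρ => P α ρ ν) (fun ρ c => T α ρ c ν)
    (fun ρ c => A ρ c ν) (fun ρ c s => A α s c) (fun ρ => A β γ ρ)
    (fun ρ => hP α ρ ν)
  have e2 := expand_gen lam p (fun ρ => P β γ ρ) (fun ρ c => T β γ c ρ)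
    (fun ρ c => A γ c ρ) (fun ρ c s => A β s c) (fun ρ => A α ρ ν)
    (fun ρ => hP β γ ρ)
  have e3 := expand_gen lam p (fun ρ => P α β ρ) (fun ρ c => T α β c ρ)
    (fun ρ c => A β c ρ) (fun ρ c s => A α s c) (fun ρ => A ρ γ ν)
    (fun ρ => hP α β ρ)
  have e4 := expand_gen lam p (fun ρ => P ρ γ ν) (fun ρ c => T ρ γ c ν)
    (fun ρ c => A γ c ν) (fun ρ c s => A ρ s c) (fun ρ => A α β ρ)
    (fun ρ => hP ρ γ ν)
  have c2 : ∑ ρ, A α ρ ν * P β γ ρ = ∑ ρ, P β γ ρ * A α ρ ν :=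
    sum_congr' fun ρ => mul_comm _ _
  have c4 : ∑ ρ, A α β ρ * P ρ γ ν = ∑ ρ, P ρ γ ν * A α β ρ :=
    sum_congr' fun ρ => mul_comm _ _
  rw [c2, c4, e1, e2, e3, e4]
  -- linear (in lam) level
  have hL : (∑ c, p c * ∑ ρ, T α ρ c ν * A β γ ρ)
        + (∑ c, p c * ∑ ρ, T β γ c ρ * A α ρ ν)
      = (∑ c, p c * ∑ ρ, T α β c ρ * A ρ γ ν)
        + (∑ c, p c * ∑ ρ, T ρ γ c ν * A α β ρ) := by
    rw [← Finset.sum_add_distrib, ← Finset.sum_add_distrib]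
    refine sum_congr' fun c => ?_
    rw [← mul_add, ← mul_add]
    congr 1
    have h := hdA c α β γ ν
    rw [Finset.sum_add_distrib, Finset.sum_add_distrib] at h
    calc (∑ ρ, T α ρ c ν * A β γ ρ) + ∑ ρ, T β γ c ρ * A α ρ ν
        = (∑ ρ, T c α ρ ν * A β γ ρ) + ∑ ρ, A α ρ ν * T c β γ ρ := by
          congr 1
          · exact sum_congr' fun ρ => by rw [T231 c α ρ]
          · exact sum_congr' fun ρ => by rw [T231 c β γ]; ring
      _ = (∑ ρ, T c α β ρ * A ρ γ ν) + ∑ ρ, A α β ρ * T c ρ γ ν := h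
      _ = (∑ ρ, T α β c ρ * A ρ γ ν) + ∑ ρ, T ρ γ c ν * A α β ρ := by
          congr 1
          · exact sum_congr' fun ρ => by rw [T231 c α β]
          · exact sum_congr' fun ρ => by rw [T231 c ρ γ]; ring
  -- quadratic level, first pieces
  have hQ1 : ∀ t, (∑ ρ, ∑ c, A ρ c ν * A α t c * A β γ ρ)
      = ∑ ρ, ∑ c, A β c ρ * A α t c * A ρ γ ν := by
    intro t
    calc ∑ ρ, ∑ c, A ρ c ν * A α t c * A β γ ρ
        = ∑ c, A α t c * ∑ ρ, A c ρ ν * A β γ ρ := by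
          rw [Finset.sum_comm]
          refine sum_congr' fun c => ?_
          rw [Finset.mul_sum]
          exact sum_congr' fun ρ => by rw [hAs ρ c]; ring
      _ = ∑ c, A α t c * ∑ ρ, A c β ρ * A ρ γ ν := by
          exact sum_congr' fun c => by rw [hA c β γ ν]
      _ = ∑ ρ, ∑ c, A β c ρ * A α t c * A ρ γ ν := by
          rw [Finset.sum_comm]
          refine sum_congr' fun c => ?_
          rw [Finset.mul_sum]
          exact sum_congr' fun ρ => by rw [hAs c β]; ring
  -- quadratic level, second pieces
  have hQ2 : ∀ t, (∑ ρ, ∑ c, A γ c ρ * A β t c * A α ρ ν)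
      = ∑ ρ, ∑ c, A γ c ν * A ρ t c * A α β ρ := by
    intro t
    calc ∑ ρ, ∑ c, A γ c ρ * A β t c * A α ρ ν
        = ∑ ρ, A α ρ ν * ∑ c, A γ c ρ * A β t c := by
          refine sum_congr' fun ρ => ?_
          rw [Finset.mul_sum]
          exact sum_congr' fun c => by ring
      _ = ∑ ρ, A α ρ ν * ∑ c, A γ β c * A c t ρ := by
          exact sum_congr' fun ρ => by rw [hA γ β t ρ]
      _ = ∑ ρ, ∑ c, A α ρ ν * (A γ β c * A c t ρ) := by
          exact sum_congr' fun ρ => Finset.mul_sum _ _ _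
      _ = ∑ c, ∑ ρ, A α ρ ν * (A γ β c * A c t ρ) := Finset.sum_comm
      _ = ∑ c, A γ β c * ∑ ρ, A α ρ ν * A c t ρ := by
          refine sum_congr' fun c => ?_
          rw [Finset.mul_sum]
          exact sum_congr' fun ρ => by ring
      _ = ∑ c, A γ β c * ∑ ρ, A α c ρ * A ρ t ν := by
          exact sum_congr' fun c => by rw [hA α c t ν]
      _ = ∑ c, ∑ ρ, A γ β c * (A α c ρ * A ρ t ν) := by
          exact sum_congr' fun c => Finset.mul_sum _ _ _
      _ = ∑ ρ, ∑ c, A γ β c * (A α c ρ * A ρ t ν) := Finset.sum_comm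
      _ = ∑ ρ, A ρ t ν * ∑ c, A α c ρ * A β γ c := by
          refine sum_congr' fun ρ => ?_
          rw [Finset.mul_sum]
          exact sum_congr' fun c => by rw [hAs γ β]; ring
      _ = ∑ ρ, A ρ t ν * ∑ c, A α β c * A c γ ρ := by
          exact sum_congr' fun ρ => by rw [hA α β γ ρ]
      _ = ∑ ρ, ∑ c, A ρ t ν * (A α β c * A c γ ρ) := by
          exact sum_congr' fun ρ => Finset.mul_sum _ _ _
      _ = ∑ c, ∑ ρ, A ρ t ν * (A α β c * A c γ ρ) := Finset.sum_comm
      _ = ∑ ρ, A α β ρ * ∑ c, A ρ γ c * A c t ν := by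
          refine sum_congr' fun ρ => ?_
          rw [Finset.mul_sum]
          exact sum_congr' fun c => by ring
      _ = ∑ ρ, A α β ρ * ∑ c, A γ c ν * A ρ t c := by
          refine sum_congr' fun ρ => ?_
          congr 1
          calc ∑ c, A ρ γ c * A c t ν
              = ∑ c, A γ ρ c * A c t ν := sum_congr' fun c => by rw [hAs ρ γ]
            _ = ∑ c, A γ c ν * A ρ t c := (hA γ ρ t ν).symm
      _ = ∑ ρ, ∑ c, A γ c ν * A ρ t c * A α β ρ := by
          refine sum_congr' fun ρ => ?_
          rw [Finset.mul_sum]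
          exact sum_congr' fun c => by ring
  have hQ : (∑ s, p s * ∑ ρ, ∑ c, A ρ c ν * A α s c * A β γ ρ)
        + (∑ s, p s * ∑ ρ, ∑ c, A γ c ρ * A β s c * A α ρ ν)
      = (∑ s, p s * ∑ ρ, ∑ c, A β c ρ * A α s c * A ρ γ ν)
        + (∑ s, p s * ∑ ρ, ∑ c, A γ c ν * A ρ s c * A α β ρ) := by
    rw [← Finset.sum_add_distrib, ← Finset.sum_add_distrib]
    refine sum_congr' fun t => ?_
    rw [← mul_add, ← mul_add, hQ1 t, hQ2 t]
  linear_combination lam * hL + lam ^ 2 * hQ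
/-- a solution `ψ` of the vector spectral problem is a symmetry
characteristic of the oriented associativity equations. -/
theorem vector_spectral_solution_is_symmetry
    {n : ℕ} (hn : 1 ≤ n)
    (K ψ : Fin n → (Fin n → ℝ) → ℝ) (lam : ℝ)
    (hK : ∀ α, ContDiff ℝ (⊤ : ℕ∞) (K α))
    (hψ : ∀ α, ContDiff ℝ (⊤ : ℕ∞) (ψ α))
    (hAE : ∀ α β γ ν, ∀ x : Fin n → ℝ,
      ∑ ρ, pd α (pd ρ (K ν)) x * pd β (pd γ (K ρ)) x
        = ∑ ρ, pd α (pd β (K ρ)) x * pd ρ (pd γ (K ν)) x)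
    (hsp : ∀ α β, ∀ x : Fin n → ℝ,
      pd β (ψ α) x = lam * ∑ γ, pd β (pd γ (K α)) x * ψ γ x) :
    ∀ α β γ ν, ∀ x : Fin n → ℝ,
      (∑ ρ, pd α (pd ρ (ψ ν)) x * pd β (pd γ (K ρ)) x)
        + (∑ ρ, pd α (pd ρ (K ν)) x * pd β (pd γ (ψ ρ)) x)
      = (∑ ρ, pd α (pd β (ψ ρ)) x * pd ρ (pd γ (K ν)) x)
        + (∑ ρ, pd α (pd β (K ρ)) x * pd ρ (pd γ (ψ ν)) x) := by
  -- smoothness of iterated partials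
  have hK1 : ∀ (a : Fin n) (m : Fin n), ContDiff ℝ (⊤ : ℕ∞) (pd a (K m)) :=
    fun a m => pd_smooth a (hK m)
  have hK2 : ∀ (a b m : Fin n), ContDiff ℝ (⊤ : ℕ∞) (pd a (pd b (K m))) :=
    fun a b m => pd_smooth a (hK1 b m)
  -- second derivatives of ψ via the spectral problem
  have hψ2 : ∀ (a b m : Fin n) (x : Fin n → ℝ),
      pd a (pd b (ψ m)) x
        = lam * ∑ c, (pd a (pd b (pd c (K m))) x * ψ c x
            + pd b (pd c (K m)) x * (lam * ∑ s, pd a (pd s (K c)) x * ψ s x)) := by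
    intro a b m x
    have hfun : pd b (ψ m) = fun y => lam * ∑ c, pd b (pd c (K m)) y * ψ c y :=
      funext (hsp m b)
    rw [hfun]
    have hsmul : ∀ c : Fin n, ContDiff ℝ (⊤ : ℕ∞) (fun y => pd b (pd c (K m)) y * ψ c y) :=
      fun c => (hK2 b c m).mul (hψ c)
    have hsum : ContDiff ℝ (⊤ : ℕ∞) (fun y => ∑ c, pd b (pd c (K m)) y * ψ c y) := by
      apply ContDiff.sum
      intro c _
      exact hsmul c
    rw [pd_const_mul a lam hsum x]
    congr 1
    rw [pd_sum a _ hsmul x]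
    refine sum_congr' fun c => ?_
    rw [pd_mul a (hK2 b c m) (hψ c) x]
    rw [hsp c a x]
  -- differentiated associativity equations
  have hAE' : ∀ (s a b c m : Fin n) (x : Fin n → ℝ),
      ∑ ρ, (pd s (pd a (pd ρ (K m))) x * pd b (pd c (K ρ)) x
          + pd a (pd ρ (K m)) x * pd s (pd b (pd c (K ρ))) x)
        = ∑ ρ, (pd s (pd a (pd b (K ρ))) x * pd ρ (pd c (K m)) x
          + pd a (pd b (K ρ)) x * pd s (pd ρ (pd c (K m))) x) := by
    intro s a b c m x
    have hfun : (fun y => ∑ ρ, pd a (pd ρ (K m)) y * pd b (pd c (K ρ)) y)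
        = fun y => ∑ ρ, pd a (pd b (K ρ)) y * pd ρ (pd c (K m)) y :=
      funext (hAE a b c m)
    have h2 := congrFun (congrArg (pd s) hfun) x
    rw [pd_sum s _ (fun ρ => (hK2 a ρ m).mul (hK2 b c ρ)) x,
        pd_sum s _ (fun ρ => (hK2 a b ρ).mul (hK2 ρ c m)) x] at h2
    calc ∑ ρ, (pd s (pd a (pd ρ (K m))) x * pd b (pd c (K ρ)) x
            + pd a (pd ρ (K m)) x * pd s (pd b (pd c (K ρ))) x)
        = ∑ ρ, pd s (fun y => pd a (pd ρ (K m)) y * pd b (pd c (K ρ)) y) x := by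
          refine sum_congr' fun ρ => ?_
          rw [pd_mul s (hK2 a ρ m) (hK2 b c ρ) x]
      _ = ∑ ρ, pd s (fun y => pd a (pd b (K ρ)) y * pd ρ (pd c (K m)) y) x := h2
      _ = ∑ ρ, (pd s (pd a (pd b (K ρ))) x * pd ρ (pd c (K m)) x
            + pd a (pd b (K ρ)) x * pd s (pd ρ (pd c (K m))) x) := by
          refine sum_congr' fun ρ => ?_
          rw [pd_mul s (hK2 a b ρ) (hK2 ρ c m) x]
  -- conclude via the abstract algebraic lemma
  intro α β γ ν x
  exact key_alg (fun a b m => pd a (pd b (K m)) x)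
    (fun s a b m => pd s (pd a (pd b (K m))) x)
    (fun c => ψ c x) lam
    (fun a b m => congrFun (pd_comm a b (hK m)) x)
    (fun s a b m => congrFun (pd_comm s a (hK1 b m)) x)
    (fun s a b m => congrFun (congrArg (pd s) (pd_comm a b (hK m))) x)
    (fun a b c m => hAE a b c m x)
    (fun s a b c m => hAE' s a b c m x)
    (fun a b m => pd a (pd b (ψ m)) x)
    (fun a b m => hψ2 a b m x)
    α β γ ν
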